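/- arXiv:1602.00664 — 9 statements merged into one kernel-verified Lean document; each statement's English description precedes it below -/
import Mathlib

section
/- Let G be a locally compact Hausdorff topological group and let Γ be a discrete subgroup of G which is cocompact, i.e. there exists a compact set C ⊆ G with Γ·C = G. Then for every γ ∈ Γ, the subgroup Γ ∩ Z(γ) is cocompact in the centralizer Z(γ): there exists a compact set K ⊆ Z(γ) such that every element z of Z(γ) can be written z = δ·k with δ ∈ Γ ∩ Z(γ) and k ∈ K. -/
open Pointwise

/-!
Write `z ∈ Z(γ)` as `z = δ * c` with `δ ∈ Γ`, `c ∈ C`. Then `δ⁻¹ γ δ = c γ c⁻¹` lies in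
`Γ ∩ {c γ c⁻¹ | c ∈ C}`, a finite set since it is compact and discrete. Fixing a finite set `D`
of elements of `Γ` realising each of these conjugates, we find `d ∈ D` with `d⁻¹ γ d = δ⁻¹ γ δ`,
so `δ d⁻¹ ∈ Γ ∩ Z(γ)` and `z = (δ d⁻¹) (d c)` with `d c` in the compact set `Z(γ) ∩ D C`.
-/

theorem Set.Finite.exists_finite_subset_image_eq {α β : Type*} {f : α → β} {s : Set α}
    (hs : (f '' s).Finite) : ∃ D ⊆ s, D.Finite ∧ ∀ a ∈ s, ∃ d ∈ D, f d = f a := by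
  obtain ⟨D, hDs, hD⟩ := Set.exists_subset_bijOn s f
  refine ⟨D, hDs, Set.Finite.of_finite_image (hD.image_eq ▸ hs) hD.injOn, fun a ha => ?_⟩
  exact hD.surjOn (Set.mem_image_of_mem f ha)

theorem Subgroup.finite_inter_of_isCompact {G : Type*} [Group G] [TopologicalSpace G]
    [IsTopologicalGroup G] [T2Space G] (Γ : Subgroup G) [DiscreteTopology Γ] {K : Set G}
    (hK : IsCompact K) : ((Γ : Set G) ∩ K).Finite :=
  (hK.inter_left Γ.isClosed_of_discrete).finite
    (isDiscrete_iff_discreteTopology.mpr (DiscreteTopology.of_subset ‹_› Set.inter_subset_left))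

section Conjugation

variable {G : Type*} [Group G] {γ δ d c : G}

theorem conj_eq_of_mul_mem_centralizer (h : δ * c ∈ Subgroup.centralizer {γ}) :
    δ⁻¹ * γ * δ = c * γ * c⁻¹ := by
  have hcomm : γ * (δ * c) = δ * c * γ := Subgroup.mem_centralizer_singleton_iff.mp h |>.symm
  calc δ⁻¹ * γ * δ = δ⁻¹ * (γ * (δ * c)) * c⁻¹ := by group
    _ = δ⁻¹ * (δ * c * γ) * c⁻¹ := by rw [hcomm]
    _ = c * γ * c⁻¹ := by group

theorem mul_inv_mem_centralizer_of_conj_eq (h : d⁻¹ * γ * d = δ⁻¹ * γ * δ) :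
    δ * d⁻¹ ∈ Subgroup.centralizer {γ} := by
  refine Subgroup.mem_centralizer_singleton_iff.mpr ?_
  calc δ * d⁻¹ * γ = δ * (d⁻¹ * γ * d) * d⁻¹ := by group
    _ = δ * (δ⁻¹ * γ * δ) * d⁻¹ := by rw [h]
    _ = γ * (δ * d⁻¹) := by group

end Conjugation

theorem cocompact_inter_centralizer_general
    {G : Type*} [Group G] [TopologicalSpace G] [IsTopologicalGroup G]
    [T2Space G]
    (Γ : Subgroup G) (hdisc : DiscreteTopology Γ)
    (hcocompact : ∃ C : Set G, IsCompact C ∧ (Γ : Set G) * C = Set.univ)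
    (γ : G) (hγ : γ ∈ Γ) :
    ∃ K : Set G, K ⊆ (Subgroup.centralizer {γ} : Set G) ∧ IsCompact K ∧
      ∀ z ∈ Subgroup.centralizer {γ},
        ∃ δ ∈ Γ ⊓ Subgroup.centralizer {γ}, ∃ k ∈ K, z = δ * k := by
  obtain ⟨C, hC, hΓC⟩ := hcocompact
  set Z := Subgroup.centralizer {γ}
  have hconjC : IsCompact ((fun c => c * γ * c⁻¹) '' C) := hC.image (by fun_prop)
  set conj : G → G := fun g => g⁻¹ * γ * g
  set S := {δ : G | δ ∈ Γ ∧ conj δ ∈ (fun c => c * γ * c⁻¹) '' C}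
  have hconjS : (conj '' S).Finite := by
    refine (Γ.finite_inter_of_isCompact hconjC).subset ?_
    rintro _ ⟨δ, ⟨hδ, hδC⟩, rfl⟩
    exact ⟨mul_mem (mul_mem (inv_mem hδ) hγ) hδ, hδC⟩
  obtain ⟨D, hDS, hDfin, hD⟩ := hconjS.exists_finite_subset_image_eq
  have hZclosed : IsClosed (Z : Set G) := Set.isClosed_centralizer _
  refine ⟨(Z : Set G) ∩ (D * C), Set.inter_subset_left,
    (hDfin.isCompact.mul hC).inter_left hZclosed, ?_⟩
  intro z hz
  obtain ⟨δ, hδ, c, hc, rfl⟩ : z ∈ (Γ : Set G) * C := hΓC ▸ Set.mem_univ z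
  obtain ⟨d, hdD, hd⟩ := hD δ ⟨hδ, c, hc, (conj_eq_of_mul_mem_centralizer hz).symm⟩
  have hδd : δ * d⁻¹ ∈ Z := mul_inv_mem_centralizer_of_conj_eq hd
  have hdc : d * c = (δ * d⁻¹)⁻¹ * (δ * c) := by group
  refine ⟨δ * d⁻¹, Subgroup.mem_inf.mpr ⟨mul_mem hδ (inv_mem (hDS hdD).1), hδd⟩,
    d * c, ⟨hdc ▸ mul_mem (inv_mem hδd) hz, Set.mul_mem_mul hdD hc⟩, by group⟩

/-- Let `G` be a locally compact Hausdorff topological group and `Γ` a discrete subgroup of `G`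
which is cocompact.  Then for every `γ ∈ Γ`, the subgroup `Γ ∩ Z(γ)` is cocompact in the
centralizer `Z(γ)`. -/
theorem cocompact_inter_centralizer
    {G : Type*} [Group G] [TopologicalSpace G] [IsTopologicalGroup G]
    [LocallyCompactSpace G] [T2Space G]
    (Γ : Subgroup G) (hdisc : DiscreteTopology Γ)
    (hcocompact : ∃ C : Set G, IsCompact C ∧ (Γ : Set G) * C = Set.univ)
    (γ : G) (hγ : γ ∈ Γ) :
    ∃ K : Set G, K ⊆ (Subgroup.centralizer {γ} : Set G) ∧ IsCompact K ∧
      ∀ z ∈ Subgroup.centralizer {γ},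
        ∃ δ ∈ Γ ⊓ Subgroup.centralizer {γ}, ∃ k ∈ K, z = δ * k :=
  cocompact_inter_centralizer_general Γ hdisc hcocompact γ hγ
end

section
/- Let ι be a countable index set and d : ι → ℝ a function such that d i ≥ c₀ for all i ∈ ι, for some constant c₀ > 0. Assume there exists C > 0 such that for every r ≥ 0 the set {i ∈ ι : d i ≤ r} is finite with cardinality at most C·exp(C·r). Then for every c > 0 there exist constants c' > 0 and C' > 0 such that for all t > 0 the family i ↦ exp(−c·(d i)²/t) is summable and ∑_{i ∈ ι} exp(−c·(d i)²/t) ≤ C'·exp(−c'/t + C'·t). -/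
/-!
Since `d ≥ c₀`, completing the square gives `c d²/t ≥ c c₀²/(2t) - κ² t/(2c) + κ d` for
every `κ`, which splits each term into the factor `exp (-c'/t + K t)` and the `t`-independent
term `exp (-κ d)`. For `κ > C` the latter is summable: at most `C e^{Cn}` indices lie in the
shell `⌈d⌉₊ = n`, each contributing at most `e^{-κ(n-1)}`, and these bounds form a geometric
series.
-/

open Real

theorem summable_of_le_comp_of_ncard_fiber_le {ι β : Type*} {g : ι → ℝ}
    {f : ι → β} {b m : β → ℝ} (hg : ∀ i, 0 ≤ g i) (hgb : ∀ i, g i ≤ b (f i))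
    (hb : ∀ n, 0 ≤ b n) (hfin : ∀ n, (f ⁻¹' {n}).Finite)
    (hcard : ∀ n, ((f ⁻¹' {n}).ncard : ℝ) ≤ m n)
    (hsum : Summable fun n => m n * b n) : Summable g := by
  classical
  refine summable_of_sum_le (c := ∑' n, m n * b n) hg fun s => ?_
  have hfiber : ∀ n, ((s.filter fun i => f i = n).card : ℝ) ≤ m n := fun n => by
    refine le_trans ?_ (hcard n)
    have hsub : ↑(s.filter fun i => f i = n) ⊆ f ⁻¹' {n} := fun i hi =>
      (Finset.mem_filter.mp hi).2
    rw [← Set.ncard_coe_finset]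
    exact_mod_cast Set.ncard_le_ncard hsub (hfin n)
  have hmb : ∀ n, 0 ≤ m n * b n := fun n =>
    mul_nonneg ((Nat.cast_nonneg _).trans (hfiber n)) (hb n)
  calc ∑ i ∈ s, g i ≤ ∑ i ∈ s, b (f i) := Finset.sum_le_sum fun i _ => hgb i
    _ = ∑ n ∈ s.image f, (s.filter fun i => f i = n).card • b n := Finset.sum_comp b f
    _ ≤ ∑ n ∈ s.image f, m n * b n := Finset.sum_le_sum fun n _ => by
      rw [nsmul_eq_mul]
      exact mul_le_mul_of_nonneg_right (hfiber n) (hb n)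
    _ ≤ ∑' n, m n * b n := hsum.sum_le_tsum _ fun n _ => hmb n

theorem summable_exp_neg_mul_of_ncard_le {ι : Type*} (d : ι → ℝ) (hd : ∀ i, 0 ≤ d i)
    {C κ : ℝ} (hCκ : C < κ) (hfin : ∀ n : ℕ, {i | d i ≤ n}.Finite)
    (hcard : ∀ n : ℕ, ({i | d i ≤ n}.ncard : ℝ) ≤ C * exp (C * n)) :
    Summable fun i => exp (-κ * d i) := by
  have hC : 0 ≤ C := by simpa using (Nat.cast_nonneg _).trans (hcard 0)
  have hsub : ∀ n : ℕ, (fun i => ⌈d i⌉₊) ⁻¹' {n} ⊆ {i | d i ≤ n} := by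
    rintro n i (rfl : ⌈d i⌉₊ = n)
    exact Nat.le_ceil (d i)
  refine summable_of_le_comp_of_ncard_fiber_le (b := fun n : ℕ => exp (-κ * (n - 1)))
    (m := fun n : ℕ => C * exp (C * n)) (fun i => (exp_pos _).le) (fun i => ?_)
    (fun n => (exp_pos _).le) (fun n => (hfin n).subset (hsub n))
    (fun n => (Nat.cast_le.mpr (Set.ncard_le_ncard (hsub n) (hfin n))).trans (hcard n)) ?_
  · have := Nat.ceil_lt_add_one (hd i)
    exact exp_le_exp.mpr (by nlinarith)
  · have hgeom : Summable fun n : ℕ => exp (n * (C - κ)) :=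
      summable_exp_nat_mul_iff.mpr (by linarith)
    refine (hgeom.mul_left (C * exp κ)).congr fun n => ?_
    rw [mul_assoc, mul_assoc, ← exp_add, ← exp_add]
    ring_nf

theorem exp_neg_mul_sq_div_le {c t c₀ x : ℝ} (hc : 0 < c) (ht : 0 < t) (hc₀ : 0 ≤ c₀)
    (hx : c₀ ≤ x) (κ : ℝ) :
    exp (-c * x ^ 2 / t) ≤
      exp (-(c * c₀ ^ 2 / 2) / t + κ ^ 2 / (2 * c) * t) * exp (-κ * x) := by
  rw [← exp_add, exp_le_exp, ← sub_nonneg]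
  have hsplit : -(c * c₀ ^ 2 / 2) / t + κ ^ 2 / (2 * c) * t + -κ * x - -c * x ^ 2 / t
      = c * (x ^ 2 - c₀ ^ 2) / (2 * t) + (c * x - κ * t) ^ 2 / (2 * c * t) := by
    field_simp
    ring
  rw [hsplit]
  have : 0 ≤ x ^ 2 - c₀ ^ 2 := sub_nonneg.mpr (pow_le_pow_left₀ hc₀ hx 2)
  positivity

theorem summable_exp_of_counting_bound_general
    {ι : Type*} (d : ι → ℝ) (c₀ : ℝ) (hc₀ : 0 < c₀)
    (hd : ∀ i, c₀ ≤ d i) (C : ℝ)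
    (hcount : ∀ r : ℝ, 0 ≤ r → {i : ι | d i ≤ r}.Finite ∧
      ({i : ι | d i ≤ r}.ncard : ℝ) ≤ C * Real.exp (C * r)) :
    ∀ c : ℝ, 0 < c → ∃ c' > (0 : ℝ), ∃ C' > (0 : ℝ), ∀ t : ℝ, 0 < t →
      Summable (fun i : ι => Real.exp (-c * (d i) ^ 2 / t)) ∧
      ∑' i : ι, Real.exp (-c * (d i) ^ 2 / t) ≤ C' * Real.exp (-c' / t + C' * t) := by
  intro c hc
  have hS : Summable fun i => exp (-(C + 1) * d i) :=
    summable_exp_neg_mul_of_ncard_le d (fun i => hc₀.le.trans (hd i)) (lt_add_one C)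
      (fun n => (hcount n n.cast_nonneg).1) (fun n => (hcount n n.cast_nonneg).2)
  set S := ∑' i, exp (-(C + 1) * d i)
  set K := (C + 1) ^ 2 / (2 * c)
  have hS₀ : 0 ≤ S := tsum_nonneg fun i => (exp_pos _).le
  have hK₀ : 0 ≤ K := by positivity
  refine ⟨c * c₀ ^ 2 / 2, by positivity, S + K + 1, by positivity, fun t ht => ?_⟩
  set E := exp (-(c * c₀ ^ 2 / 2) / t + K * t)
  have hpt : ∀ i, exp (-c * d i ^ 2 / t) ≤ E * exp (-(C + 1) * d i) := fun i =>
    exp_neg_mul_sq_div_le hc ht hc₀.le (hd i) (C + 1)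
  have hsum := (hS.mul_left E).of_nonneg_of_le (fun i => (exp_pos _).le) hpt
  refine ⟨hsum, ?_⟩
  calc ∑' i, exp (-c * d i ^ 2 / t)
      ≤ ∑' i, E * exp (-(C + 1) * d i) := hsum.tsum_le_tsum hpt (hS.mul_left E)
    _ = S * E := by rw [tsum_mul_left, mul_comm]
    _ ≤ (S + K + 1) * exp (-(c * c₀ ^ 2 / 2) / t + (S + K + 1) * t) := by
      gcongr
      · linarith
      · exact exp_le_exp.mpr (by nlinarith)

/-- Let `ι` be a countable index set and `d : ι → ℝ` with `d i ≥ c₀ > 0`.  Assume there is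
`C > 0` such that for every `r ≥ 0` the sublevel set `{i | d i ≤ r}` is finite with cardinality
at most `C · exp (C·r)`.  Then for every `c > 0` there are `c' > 0` and `C' > 0` such that for
all `t > 0` the family `i ↦ exp (−c·(d i)²/t)` is summable with sum at most
`C' · exp (−c'/t + C'·t)`. -/
theorem summable_exp_of_counting_bound
    {ι : Type*} [Countable ι] (d : ι → ℝ) (c₀ : ℝ) (hc₀ : 0 < c₀)
    (hd : ∀ i, c₀ ≤ d i) (C : ℝ) (hC : 0 < C)
    (hcount : ∀ r : ℝ, 0 ≤ r → {i : ι | d i ≤ r}.Finite ∧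
      ({i : ι | d i ≤ r}.ncard : ℝ) ≤ C * Real.exp (C * r)) :
    ∀ c : ℝ, 0 < c → ∃ c' > (0 : ℝ), ∃ C' > (0 : ℝ), ∀ t : ℝ, 0 < t →
      Summable (fun i : ι => Real.exp (-c * (d i) ^ 2 / t)) ∧
      ∑' i : ι, Real.exp (-c * (d i) ^ 2 / t) ≤ C' * Real.exp (-c' / t + C' * t) :=
  summable_exp_of_counting_bound_general d c₀ hc₀ hd C hcount
end

section
/- Let ι be a countable index set, w : ι → ℝ a function with w i ≥ 0 for all i, and a : ι → ℝ a function with a i > 0 for all i. Suppose there exist constants C₁ > 0, C₂ > 0 and C₃ > 0 such that for every t > 0 the family i ↦ w i · a i · exp(−(a i)²/(4t)) is summable with ∑_{i ∈ ι} w i · a i · exp(−(a i)²/(4t)) ≤ C₁·exp(−C₂/t + C₃·t). Then for every real σ with σ > √C₃, the family i ↦ w i · exp(−σ·(a i)) is summable. -/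
open Real Filter Finset Topology

/-- Let `ι` be countable, `w : ι → ℝ` nonnegative and `a : ι → ℝ` positive.  If there are
constants `C₁, C₂, C₃ > 0` such that for all `t > 0` the family
`i ↦ w i · a i · exp (−(a i)²/(4t))` is summable with sum at most `C₁ exp (−C₂/t + C₃ t)`,
then for every `σ > √C₃` the family `i ↦ w i · exp (−σ · a i)` is summable. -/
theorem summable_exp_of_gaussian_bound
    {ι : Type*} [Countable ι] (w a : ι → ℝ)
    (hw : ∀ i, 0 ≤ w i) (ha : ∀ i, 0 < a i)
    (C₁ C₂ C₃ : ℝ) (hC₁ : 0 < C₁) (hC₂ : 0 < C₂) (hC₃ : 0 < C₃)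
    (hsum : ∀ t : ℝ, 0 < t →
      Summable (fun i : ι => w i * a i * Real.exp (-(a i) ^ 2 / (4 * t))) ∧
      ∑' i : ι, w i * a i * Real.exp (-(a i) ^ 2 / (4 * t)) ≤
        C₁ * Real.exp (-C₂ / t + C₃ * t)) :
    ∀ σ : ℝ, Real.sqrt C₃ < σ →
      Summable (fun i : ι => w i * Real.exp (-σ * a i)) := by
  classical
  intro σ hσ
  set s := Real.sqrt C₃ with hs_def
  have hs0 : 0 < s := Real.sqrt_pos.2 hC₃
  have hσ0 : 0 < σ := hs0.trans hσ
  have hC₃s : C₃ = s ^ 2 := (Real.sq_sqrt hC₃.le).symm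
  set c := Real.sqrt C₂ with hc_def
  have hc0 : 0 < c := Real.sqrt_pos.2 hC₂
  -- single term bound
  have key : ∀ (i : ι) (t : ℝ), 0 < t → w i * a i * Real.exp (-(a i) ^ 2 / (4 * t)) ≤
      C₁ * Real.exp (-C₂ / t + C₃ * t) := by
    intro i t ht
    refine le_trans (Summable.le_tsum (hsum t ht).1 i fun j _ =>
      mul_nonneg (mul_nonneg (hw j) (ha j).le) (Real.exp_nonneg _)) (hsum t ht).2
  -- small `a i` forces `w i = 0`
  have hzero : ∀ i, a i ≤ c → w i = 0 := by
    intro i hi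
    by_contra hne
    have hwi : 0 < w i := (hw i).lt_of_ne (Ne.symm hne)
    have hwa : 0 < w i * a i := mul_pos hwi (ha i)
    have ha2 : (a i) ^ 2 ≤ C₂ := by
      have := pow_le_pow_left₀ (ha i).le hi 2
      rwa [hc_def, Real.sq_sqrt hC₂.le] at this
    have hb : ∀ n : ℕ, w i * a i ≤
        (C₁ * Real.exp C₃) * Real.exp (-(3 * C₂ / 4)) ^ (n + 1) := by
      intro n
      have htp : (0:ℝ) < 1 / ((n:ℝ) + 1) := by positivity
      have h1 := key i (1 / ((n:ℝ) + 1)) htp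
      have hepos : (0:ℝ) < Real.exp (-(a i) ^ 2 / (4 * (1 / ((n:ℝ) + 1)))) :=
        Real.exp_pos _
      have h2 : w i * a i ≤ C₁ * Real.exp (-C₂ / (1 / ((n:ℝ)+1)) + C₃ * (1 / ((n:ℝ)+1)))
          * Real.exp ((a i) ^ 2 / (4 * (1 / ((n:ℝ) + 1)))) := by
        have hx : Real.exp (-(a i) ^ 2 / (4 * (1 / ((n:ℝ) + 1))))
            * Real.exp ((a i) ^ 2 / (4 * (1 / ((n:ℝ) + 1)))) = 1 := by
          rw [← Real.exp_add, neg_div]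
          simp
        calc w i * a i
            = w i * a i * Real.exp (-(a i) ^ 2 / (4 * (1 / ((n:ℝ) + 1))))
              * Real.exp ((a i) ^ 2 / (4 * (1 / ((n:ℝ) + 1)))) := by
              rw [mul_assoc, hx, mul_one]
          _ ≤ _ := mul_le_mul_of_nonneg_right h1 (Real.exp_nonneg _)
      have h3 : -C₂ / (1 / ((n:ℝ)+1)) + C₃ * (1 / ((n:ℝ)+1))
            + (a i) ^ 2 / (4 * (1 / ((n:ℝ) + 1)))
          ≤ C₃ + ((n:ℝ) + 1) * (-(3 * C₂ / 4)) := by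
        have hn1 : (1:ℝ) ≤ (n:ℝ) + 1 := by
          have : (0:ℝ) ≤ (n:ℝ) := Nat.cast_nonneg n
          linarith
        have e1 : -C₂ / (1 / ((n:ℝ)+1)) = -C₂ * ((n:ℝ)+1) := by
          field_simp
        have e2 : (a i) ^ 2 / (4 * (1 / ((n:ℝ) + 1))) = (a i) ^ 2 * ((n:ℝ)+1) / 4 := by
          field_simp
        have e3 : C₃ * (1 / ((n:ℝ)+1)) ≤ C₃ := by
          rw [mul_one_div]
          exact div_le_self hC₃.le hn1
        rw [e1, e2]
        nlinarith [mul_le_mul_of_nonneg_right ha2 (by linarith : (0:ℝ) ≤ (n:ℝ)+1)]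
      calc w i * a i ≤ _ := h2
        _ = C₁ * Real.exp (-C₂ / (1 / ((n:ℝ)+1)) + C₃ * (1 / ((n:ℝ)+1))
              + (a i) ^ 2 / (4 * (1 / ((n:ℝ) + 1)))) := by
            rw [mul_assoc, ← Real.exp_add]
        _ ≤ C₁ * Real.exp (C₃ + ((n:ℝ) + 1) * (-(3 * C₂ / 4))) := by
            exact mul_le_mul_of_nonneg_left (Real.exp_le_exp.2 h3) hC₁.le
        _ = (C₁ * Real.exp C₃) * Real.exp (-(3 * C₂ / 4)) ^ (n + 1) := by
            rw [Real.exp_add, ← mul_assoc]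
            congr 1
            rw [← Real.exp_nat_mul]
            push_cast
            ring_nf
    have hr0 : (0:ℝ) ≤ Real.exp (-(3 * C₂ / 4)) := (Real.exp_pos _).le
    have hr1 : Real.exp (-(3 * C₂ / 4)) < 1 := Real.exp_lt_one_iff.2 (by linarith)
    have htend : Tendsto (fun n : ℕ => (C₁ * Real.exp C₃) * Real.exp (-(3 * C₂ / 4)) ^ (n + 1))
        atTop (𝓝 ((C₁ * Real.exp C₃) * 0)) := by
      exact Tendsto.const_mul _
        ((tendsto_pow_atTop_nhds_zero_of_lt_one hr0 hr1).comp (tendsto_add_atTop_nat 1))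
    rw [mul_zero] at htend
    exact absurd (ge_of_tendsto' htend hb) (not_le.2 hwa)
  -- geometric majorant
  set g : ℕ → ℝ := fun n => C₁ / c * Real.exp s * Real.exp (s - σ) ^ n with hg_def
  have hg0 : ∀ n, 0 ≤ g n := fun n => by positivity
  have hgsum : Summable g := by
    exact (summable_geometric_of_lt_one (Real.exp_nonneg _)
      (Real.exp_lt_one_iff.2 (by linarith))).mul_left _
  refine summable_of_sum_le (c := ∑' n, g n)
    (fun i => mul_nonneg (hw i) (Real.exp_nonneg _)) ?_
  intro u
  -- fiberwise decomposition according to ⌊a i⌋₊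
  have hfib : ∑ i ∈ u, w i * Real.exp (-σ * a i)
      = ∑ n ∈ u.image (fun i => ⌊a i⌋₊),
          ∑ i ∈ u.filter (fun i => ⌊a i⌋₊ = n), w i * Real.exp (-σ * a i) := by
    rw [Finset.sum_fiberwise_eq_sum_filter u (u.image fun i => ⌊a i⌋₊) (fun i => ⌊a i⌋₊)]
    rw [Finset.filter_true_of_mem fun i hi => Finset.mem_image_of_mem _ hi]
  have inner : ∀ n : ℕ,
      ∑ i ∈ u.filter (fun i => ⌊a i⌋₊ = n), w i * Real.exp (-σ * a i) ≤ g n := by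
    intro n
    set t : ℝ := ((n:ℝ) + 1) / (2 * s) with ht_def
    have ht0 : 0 < t := by positivity
    have h4t : s * ((n:ℝ)+1) / 2 * (4 * t) = ((n:ℝ)+1) ^ 2 := by
      rw [ht_def]; field_simp; ring
    set E : ℝ := s * ((n:ℝ)+1) / 2 - σ * n with hE_def
    have hstep : ∀ i ∈ u.filter (fun i => ⌊a i⌋₊ = n),
        w i * Real.exp (-σ * a i) ≤
          1 / c * Real.exp E * (w i * a i * Real.exp (-(a i) ^ 2 / (4 * t))) := by
      intro i hi
      have hin : ⌊a i⌋₊ = n := (Finset.mem_filter.1 hi).2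
      rcases eq_or_ne (w i) 0 with h0 | h0
      · simp [h0]
      · have hac : c < a i := lt_of_not_ge fun h => h0 (hzero i h)
        have hup : a i < (n:ℝ) + 1 := by
          have := Nat.lt_floor_add_one (a i)
          rw [hin] at this; exact_mod_cast this
        have hlo : (n:ℝ) ≤ a i := by
          have := Nat.floor_le (ha i).le
          rw [hin] at this; exact this
        have hsq : (a i) ^ 2 ≤ ((n:ℝ)+1) ^ 2 := by nlinarith [(ha i).le]
        have hdiv : (a i) ^ 2 / (4 * t) ≤ s * ((n:ℝ)+1) / 2 := by
          rw [div_le_iff₀ (by positivity), h4t]; exact hsq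
        have hexp : -σ * a i ≤ E + -(a i) ^ 2 / (4 * t) := by
          have h3 : σ * (n:ℝ) ≤ σ * a i := mul_le_mul_of_nonneg_left hlo hσ0.le
          rw [hE_def, neg_div]
          linarith
        calc w i * Real.exp (-σ * a i)
            ≤ w i * Real.exp (E + -(a i) ^ 2 / (4 * t)) :=
              mul_le_mul_of_nonneg_left (Real.exp_le_exp.2 hexp) (hw i)
          _ ≤ a i / c * (w i * Real.exp (E + -(a i) ^ 2 / (4 * t))) := by
              refine le_mul_of_one_le_left (mul_nonneg (hw i) (Real.exp_nonneg _)) ?_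
              rw [le_div_iff₀ hc0]; linarith
          _ = 1 / c * Real.exp E * (w i * a i * Real.exp (-(a i) ^ 2 / (4 * t))) := by
              rw [Real.exp_add]; field_simp
    calc ∑ i ∈ u.filter (fun i => ⌊a i⌋₊ = n), w i * Real.exp (-σ * a i)
        ≤ ∑ i ∈ u.filter (fun i => ⌊a i⌋₊ = n),
            1 / c * Real.exp E * (w i * a i * Real.exp (-(a i) ^ 2 / (4 * t))) :=
          Finset.sum_le_sum hstep
      _ = 1 / c * Real.exp E *
            ∑ i ∈ u.filter (fun i => ⌊a i⌋₊ = n), w i * a i * Real.exp (-(a i) ^ 2 / (4 * t)) := by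
          rw [Finset.mul_sum]
      _ ≤ 1 / c * Real.exp E * (C₁ * Real.exp (-C₂ / t + C₃ * t)) := by
          refine mul_le_mul_of_nonneg_left ?_ (by positivity)
          refine le_trans (Summable.sum_le_tsum _ (fun j _ =>
            mul_nonneg (mul_nonneg (hw j) (ha j).le) (Real.exp_nonneg _)) (hsum t ht0).1)
            (hsum t ht0).2
      _ ≤ g n := by
          have hCt : C₃ * t = s * ((n:ℝ)+1) / 2 := by
            rw [ht_def, hC₃s]; field_simp
          have hexp2 : E + (-C₂ / t + C₃ * t) ≤ s + (n:ℝ) * (s - σ) := by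
            have : 0 ≤ C₂ / t := div_nonneg hC₂.le ht0.le
            rw [hE_def, hCt]
            have : -C₂ / t ≤ 0 := by rw [neg_div]; linarith
            nlinarith
          have heq : 1 / c * Real.exp E * (C₁ * Real.exp (-C₂ / t + C₃ * t))
              = C₁ / c * Real.exp (E + (-C₂ / t + C₃ * t)) := by
            rw [Real.exp_add E]; ring
          have hgeq : g n = C₁ / c * Real.exp (s + (n:ℝ) * (s - σ)) := by
            show C₁ / c * Real.exp s * Real.exp (s - σ) ^ n = _
            rw [Real.exp_add, ← Real.exp_nat_mul]; ring
          rw [heq, hgeq]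
          exact mul_le_mul_of_nonneg_left (Real.exp_le_exp.2 hexp2) (by positivity)
  rw [hfib]
  exact le_trans (Finset.sum_le_sum fun n _ => inner n)
    (Summable.sum_le_tsum _ (fun n _ => hg0 n) hgsum)
end

section
/- Let V be a finite-dimensional vector space over a field k and let f : V → V be a linear endomorphism. If the fixed subspace ker(f − id_V) has dimension at least 2, then ∑_{i=0}^{dim V} (−1)^i · i · Tr(Λ^i f) = 0. -/
/-!
Both `∑ᵢ (-1)^i Tr(Λ^i f) tⁱ` and `det (1 - t f)`, the reverse of the characteristic
polynomial `χ_f`, have as `i`-th coefficient `(-1)^i` times the sum of the principal `i × i`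
minors of a matrix of `f`. Hence the sum in question is the derivative of `det (1 - t f)` at
`t = 1`. The geometric multiplicity of the eigenvalue `1` bounds its algebraic multiplicity, so
`(X - 1)² ∣ χ_f`; then `(X - 1)²` also divides the reverse of `χ_f`, whose derivative therefore
vanishes at `1`.
-/

open ExteriorAlgebra

/-- The endomorphism induced by a linear map `f : M →ₗ[R] N` on the `n`-th exterior powers,
obtained by restricting the algebra morphism `ExteriorAlgebra.map f`. -/
noncomputable def exteriorPowerMap {R M N : Type*} [CommRing R]
    [AddCommGroup M] [Module R M] [AddCommGroup N] [Module R N]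
    (n : ℕ) (f : M →ₗ[R] N) : ⋀[R]^n M →ₗ[R] ⋀[R]^n N :=
  (ExteriorAlgebra.map f).toLinearMap.restrict (p := ⋀[R]^n M) (q := ⋀[R]^n N)
    (fun x hx => by
      have h : Submodule.map (ExteriorAlgebra.map f).toLinearMap (⋀[R]^n M) ≤ ⋀[R]^n N := by
        rw [show (⋀[R]^n M : Submodule R (ExteriorAlgebra R M)) =
              LinearMap.range (ι R (M := M)) ^ n from rfl,
          Submodule.map_pow, ExteriorAlgebra.ι_range_map_map]
        exact pow_le_pow_left' (LinearMap.map_le_range) n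
      exact h (Submodule.mem_map_of_mem hx))

theorem exteriorPowerMap_eq_map {R M N : Type*} [CommRing R] [AddCommGroup M] [Module R M]
    [AddCommGroup N] [Module R N] (n : ℕ) (f : M →ₗ[R] N) :
    exteriorPowerMap n f = exteriorPower.map n f := by
  refine exteriorPower.linearMap_ext (AlternatingMap.ext fun m => Subtype.ext ?_)
  simp [exteriorPowerMap, ExteriorAlgebra.map_apply_ιMulti, Function.comp_def]

open Polynomial

namespace Polynomial

variable {R : Type*}

theorem sum_range_mul_coeff_eq_eval_one_derivative [CommSemiring R] {p : R[X]} {n : ℕ}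
    (hp : p.natDegree ≤ n) :
    ∑ i ∈ Finset.range (n + 1), (i : R) * p.coeff i = (derivative p).eval 1 := by
  have hdeg : (derivative p).natDegree < n + 1 :=
    (natDegree_derivative_le p).trans_lt (by omega)
  rw [eval_eq_sum_range' hdeg, Finset.sum_range_succ', Finset.sum_range_succ]
  simp [coeff_derivative, mul_comm,
    coeff_eq_zero_of_natDegree_lt (p := p) (by omega : _ < n + 1)]

theorem eval_derivative_eq_zero_of_sq_dvd [CommRing R] {p : R[X]} {a : R}
    (h : (X - C a) ^ 2 ∣ p) : (derivative p).eval a = 0 := by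
  obtain ⟨q, rfl⟩ := h
  simp [derivative_mul, pow_two]

theorem reverse_pow_of_domain [Semiring R] [NoZeroDivisors R] (p : R[X]) (m : ℕ) :
    (p ^ m).reverse = p.reverse ^ m := by
  induction m with
  | zero => simpa using reverse_C (1 : R)
  | succ m ih => rw [pow_succ, reverse_mul_of_domain, ih, pow_succ]

theorem reverse_X_sub_one [Ring R] : (X - 1 : R[X]).reverse = -(X - 1) := by
  nontriviality R
  rw [sub_eq_add_neg, ← C_1, ← C_neg, reverse_add_C]
  simp [reverse]

theorem X_sub_one_pow_dvd_reverse [CommRing R] [NoZeroDivisors R] {p : R[X]} {m : ℕ}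
    (h : (X - 1) ^ m ∣ p) : (X - 1) ^ m ∣ p.reverse := by
  obtain ⟨q, rfl⟩ := h
  rw [reverse_mul_of_domain, reverse_pow_of_domain, reverse_X_sub_one, neg_pow]
  exact dvd_mul_of_dvd_left (dvd_mul_left _ _) _

end Polynomial

theorem LinearMap.X_sub_C_pow_dvd_charpoly_of_le_finrank_eigenspace
    {K V : Type*} [Field K] [AddCommGroup V] [Module K V]
    [FiniteDimensional K V] (f : Module.End K V) {μ : K} {m : ℕ}
    (hm : m ≤ Module.finrank K (f.eigenspace μ)) : (X - C μ) ^ m ∣ f.charpoly :=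
  (le_rootMultiplicity_iff f.charpoly_monic.ne_zero).mp (hm.trans (f.finrank_eigenspace_le μ))

theorem Matrix.coeff_charpolyRev_eq_sum_minors {R n : Type*} [CommRing R] [Fintype n]
    [DecidableEq n] (M : Matrix n n R) (i : ℕ) :
    M.charpolyRev.coeff i =
      (-1) ^ i * ∑ s ∈ Finset.univ.powersetCard i,
        (M.submatrix (Subtype.val : s → n) (Subtype.val : s → n)).det := by
  have h : M.charpolyRev = (1 + (X : R[X]) • (-M).map C).det := by
    rw [Matrix.charpolyRev, sub_eq_add_neg, Matrix.map_neg _ (map_neg C), smul_neg]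
  rw [h, Matrix.coeff_det_one_add_X_smul_eq_sum_minors, Finset.mul_sum]
  refine Finset.sum_congr rfl fun s hs => ?_
  rw [Matrix.submatrix_neg, Pi.neg_apply, Pi.neg_apply, Matrix.det_neg, Fintype.card_coe,
    (Finset.mem_powersetCard.mp hs).2]

theorem Matrix.det_submatrix_orderEmbOfFin {R ι : Type*} [CommRing R] [LinearOrder ι]
    (M : Matrix ι ι R) (s : Finset ι) {i : ℕ} (h : s.card = i) :
    (M.submatrix (s.orderEmbOfFin h) (s.orderEmbOfFin h)).det =
      (M.submatrix (Subtype.val : s → ι) Subtype.val).det := by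
  rw [← Matrix.det_submatrix_equiv_self (s.orderIsoOfFin h).toEquiv, Matrix.submatrix_submatrix]
  rfl

theorem exteriorPower.trace_map_eq_sum_minors {R M ι : Type*} [CommRing R] [AddCommGroup M]
    [Module R M] [Fintype ι] [LinearOrder ι] (b : Module.Basis ι R M) (f : Module.End R M)
    (i : ℕ) :
    LinearMap.trace R _ (exteriorPower.map i f) =
      ∑ s ∈ Finset.univ.powersetCard i,
        ((LinearMap.toMatrix b b f).submatrix (Subtype.val : s → ι) Subtype.val).det := by
  rw [LinearMap.trace_eq_matrix_trace R (b.exteriorPower i), Matrix.trace,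
    Finset.sum_subtype _ (p := (· ∈ Set.powersetCard ι i)) (by simp [Set.powersetCard.mem_iff])]
  refine Finset.sum_congr rfl fun s _ => ?_
  rw [← Matrix.det_submatrix_orderEmbOfFin _ _ s.prop, ← Matrix.det_transpose]
  simp only [Matrix.diag_apply, LinearMap.toMatrix_apply, exteriorPower.basis_apply,
    exteriorPower.basis_repr_apply, exteriorPower.ιMulti_family, exteriorPower.map_apply_ιMulti,
    exteriorPower.ιMultiDual_apply_ιMulti]
  congr 1
  ext p q
  simp [LinearMap.toMatrix_apply, Set.powersetCard.ofFinEmbEquiv_symm_apply]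

/-- If the fixed subspace of an endomorphism `f` of a finite-dimensional vector space `V`
has dimension at least `2`, then `∑ᵢ (−1)^i · i · Tr(Λ^i f) = 0`. -/
theorem alternating_weighted_trace_sum_eq_zero
    {k V : Type*} [Field k] [AddCommGroup V] [Module k V] [FiniteDimensional k V]
    (f : V →ₗ[k] V)
    (hfix : 2 ≤ Module.finrank k (LinearMap.ker (f - LinearMap.id))) :
    ∑ i ∈ Finset.range (Module.finrank k V + 1),
      (-1 : k) ^ i * (i : k) *
        LinearMap.trace k (⋀[k]^i V) (exteriorPowerMap i f) = 0 := by
  let b := Module.finBasis k V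
  let M := LinearMap.toMatrix b b f
  have hcoeff (i : ℕ) :
      (-1 : k) ^ i * (i : k) * LinearMap.trace k (⋀[k]^i V) (exteriorPowerMap i f) =
        (i : k) * M.charpolyRev.coeff i := by
    rw [exteriorPowerMap_eq_map, exteriorPower.trace_map_eq_sum_minors b,
      Matrix.coeff_charpolyRev_eq_sum_minors]
    ring
  have hdeg : M.charpolyRev.natDegree ≤ Module.finrank k V := by
    rw [← Matrix.reverse_charpoly]
    exact M.charpoly.reverse_natDegree_le.trans_eq (by simp [M.charpoly_natDegree_eq_dim])
  have hdvd : (X - C 1) ^ 2 ∣ M.charpolyRev := by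
    rw [← Matrix.reverse_charpoly, LinearMap.charpoly_toMatrix, map_one]
    refine X_sub_one_pow_dvd_reverse
      (f.X_sub_C_pow_dvd_charpoly_of_le_finrank_eigenspace ?_)
    rwa [Module.End.eigenspace_def, one_smul, Module.End.one_eq_id]
  calc _ = ∑ i ∈ Finset.range (Module.finrank k V + 1), (i : k) * M.charpolyRev.coeff i :=
        Finset.sum_congr rfl fun i _ => hcoeff i
    _ = (derivative M.charpolyRev).eval 1 := sum_range_mul_coeff_eq_eval_one_derivative hdeg
    _ = 0 := eval_derivative_eq_zero_of_sq_dvd hdvd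
end

section
/- Let g be a Lie algebra over a field k and let B be a symmetric bilinear form on g which is invariant. Then for all v₁, v₂, v₃, v₄ ∈ g, the full alternation of the 4-linear map (w,x,y,z) ↦ B(⁅w,x⁆, ⁅y,z⁆) vanishes: ∑_{σ ∈ S₄} sgn(σ) · B(⁅v_{σ(1)}, v_{σ(2)}⁆, ⁅v_{σ(3)}, v_{σ(4)}⁆) = 0, where the sum runs over all permutations σ of {1,2,3,4} and sgn(σ) is the sign of σ. -/
lemma perm_sum_expand_aux {M : Type*} [AddCommMonoid M] {n : ℕ}
    (f : Equiv.Perm (Fin (n+1)) → M) :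
    ∑ σ, f σ = ∑ p : Fin (n+1) × Equiv.Perm (Fin n), f (Equiv.Perm.decomposeFin.symm p) :=
  (Equiv.sum_comp Equiv.Perm.decomposeFin.symm f).symm

/-- For a symmetric invariant bilinear form `B` on a Lie algebra `g` over a field `k`, the
full alternation of the 4-linear map `(w,x,y,z) ↦ B(⁅w,x⁆, ⁅y,z⁆)` vanishes. -/
theorem alternation_invariant_bilin_bracket_eq_zero
    {k L : Type*} [Field k] [LieRing L] [LieAlgebra k L]
    (B : L →ₗ[k] L →ₗ[k] k)
    (hsymm : ∀ x y : L, B x y = B y x)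
    (hinv : ∀ z x y : L, B ⁅z, x⁆ y + B x ⁅z, y⁆ = 0)
    (v : Fin 4 → L) :
    ∑ σ : Equiv.Perm (Fin 4),
      (Equiv.Perm.sign σ : ℤ) • B ⁅v (σ 0), v (σ 1)⁆ ⁅v (σ 2), v (σ 3)⁆ = 0 := by
  have flip : ∀ x a b c : L, B x ⁅a, ⁅b, c⁆⁆ + B x ⁅a, ⁅c, b⁆⁆ = 0 := by
    intro x a b c
    rw [← lie_skew b c, lie_neg, (B x).map_neg, neg_add_cancel]
  have key : ∀ x a b c : L, B x ⁅a, ⁅b, c⁆⁆ - B x ⁅b, ⁅a, c⁆⁆ + B x ⁅c, ⁅a, b⁆⁆ = 0 := by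
    intro x a b c
    have h : ⁅a, ⁅b, c⁆⁆ - ⁅b, ⁅a, c⁆⁆ + ⁅c, ⁅a, b⁆⁆ = 0 := by
      rw [← lie_lie, ← lie_skew ⁅a, b⁆ c]
      abel
    calc B x ⁅a, ⁅b, c⁆⁆ - B x ⁅b, ⁅a, c⁆⁆ + B x ⁅c, ⁅a, b⁆⁆
        = B x (⁅a, ⁅b, c⁆⁆ - ⁅b, ⁅a, c⁆⁆ + ⁅c, ⁅a, b⁆⁆) := by
          rw [(B x).map_add, (B x).map_sub]
      _ = 0 := by rw [h, (B x).map_zero]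
  simp only [perm_sum_expand_aux, Fintype.sum_prod_type, Finset.univ_unique,
    Finset.sum_singleton]
  simp only [Fin.sum_univ_four, Fin.sum_univ_succ, Fin.sum_univ_two, Finset.univ_unique,
    Finset.sum_singleton, Fin.sum_univ_zero,
    show (2:Fin 4) = Fin.succ 1 from rfl, show (3:Fin 4) = Fin.succ 2 from rfl,
    show (1:Fin 4) = Fin.succ 0 from rfl]
  simp only [Equiv.Perm.decomposeFin.symm_sign, Equiv.Perm.decomposeFin_symm_apply_zero,
    Equiv.Perm.decomposeFin_symm_apply_succ,
    show (1:Fin 3) = Fin.succ 0 from rfl, show (2:Fin 3) = Fin.succ 1 from rfl,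
    show (1:Fin 2) = Fin.succ 0 from rfl]
  norm_num [Equiv.swap_apply_def, Fin.ext_iff]
  simp only [show Fin.succ 2 = (3 : Fin 4) from rfl, show Fin.succ 1 = (2 : Fin 4) from rfl,
    show Fin.succ 0 = (1 : Fin 4) from rfl]
  linear_combination
    hinv (v 0) (v 1) ⁅v 2, v 3⁆
    - hinv (v 0) (v 1) ⁅v 3, v 2⁆
    - hinv (v 0) (v 2) ⁅v 1, v 3⁆
    + hinv (v 0) (v 2) ⁅v 3, v 1⁆
    + hinv (v 0) (v 3) ⁅v 1, v 2⁆
    - hinv (v 0) (v 3) ⁅v 2, v 1⁆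
    - hinv (v 1) (v 0) ⁅v 2, v 3⁆
    + hinv (v 1) (v 0) ⁅v 3, v 2⁆
    + hinv (v 1) (v 2) ⁅v 0, v 3⁆
    - hinv (v 1) (v 2) ⁅v 3, v 0⁆
    - hinv (v 1) (v 3) ⁅v 0, v 2⁆
    + hinv (v 1) (v 3) ⁅v 2, v 0⁆
    + hinv (v 2) (v 0) ⁅v 1, v 3⁆
    - hinv (v 2) (v 0) ⁅v 3, v 1⁆
    - hinv (v 2) (v 1) ⁅v 0, v 3⁆
    + hinv (v 2) (v 1) ⁅v 3, v 0⁆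
    + hinv (v 2) (v 3) ⁅v 0, v 1⁆
    - hinv (v 2) (v 3) ⁅v 1, v 0⁆
    - hinv (v 3) (v 0) ⁅v 1, v 2⁆
    + hinv (v 3) (v 0) ⁅v 2, v 1⁆
    + hinv (v 3) (v 1) ⁅v 0, v 2⁆
    - hinv (v 3) (v 1) ⁅v 2, v 0⁆
    - hinv (v 3) (v 2) ⁅v 0, v 1⁆
    + hinv (v 3) (v 2) ⁅v 1, v 0⁆
    + flip (v 1) (v 0) (v 2) (v 3)
    - flip (v 2) (v 0) (v 1) (v 3)
    + flip (v 3) (v 0) (v 1) (v 2)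
    - flip (v 0) (v 1) (v 2) (v 3)
    + flip (v 2) (v 1) (v 0) (v 3)
    - flip (v 3) (v 1) (v 0) (v 2)
    + flip (v 0) (v 2) (v 1) (v 3)
    - flip (v 1) (v 2) (v 0) (v 3)
    + flip (v 3) (v 2) (v 0) (v 1)
    - flip (v 0) (v 3) (v 1) (v 2)
    + flip (v 1) (v 3) (v 0) (v 2)
    - flip (v 2) (v 3) (v 0) (v 1)
    + (2:k) * key (v 0) (v 1) (v 2) (v 3)
    - (2:k) * key (v 1) (v 0) (v 2) (v 3)
    + (2:k) * key (v 2) (v 0) (v 1) (v 3)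
    - (2:k) * key (v 3) (v 0) (v 1) (v 2)
end

section
/- Let l ≥ 1 and let A be a real (2l)×(2l) matrix with Aᵀ·A = 1 and det A = 1 (i.e. A is special orthogonal). Then for every c ∈ ℝ: det(1 − e^c·A) = e^{2lc} · det(1 − e^{−c}·A), and moreover det(1 − e^{−c}·A) ≥ 0. -/
open Matrix

lemma aux_funeq (n : ℕ) (hn : Even n) (A : Matrix (Fin n) (Fin n) ℝ)
    (hA : Aᵀ * A = 1) (hdet : A.det = 1) (t : ℝ) (ht : t ≠ 0) :
    ((1 : Matrix (Fin n) (Fin n) ℝ) - t • A).det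
      = t ^ n * ((1 : Matrix (Fin n) (Fin n) ℝ) - t⁻¹ • A).det := by
  have hdetT : Aᵀ.det = 1 := by rw [Matrix.det_transpose, hdet]
  have key : (1 : Matrix (Fin n) (Fin n) ℝ) - t • Aᵀ
      = Aᵀ * ((-t) • ((1 : Matrix (Fin n) (Fin n) ℝ) - t⁻¹ • A)) := by
    rw [smul_sub, smul_smul, Matrix.mul_sub]
    rw [Matrix.mul_smul, Matrix.mul_one, Matrix.mul_smul, hA]
    rw [neg_mul, mul_inv_cancel₀ ht]
    ext i j
    simp [Matrix.sub_apply, Matrix.smul_apply, Matrix.one_apply, transpose_apply]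
    ring
  calc ((1 : Matrix (Fin n) (Fin n) ℝ) - t • A).det
      = ((1 : Matrix (Fin n) (Fin n) ℝ) - t • Aᵀ).det := by
        rw [← Matrix.det_transpose (1 - t • A), Matrix.transpose_sub,
          Matrix.transpose_smul, Matrix.transpose_one]
    _ = Aᵀ.det * ((-t) • ((1 : Matrix (Fin n) (Fin n) ℝ) - t⁻¹ • A)).det := by
        rw [key, Matrix.det_mul]
    _ = t ^ n * ((1 : Matrix (Fin n) (Fin n) ℝ) - t⁻¹ • A).det := by
        rw [hdetT, one_mul, Matrix.det_smul, Fintype.card_fin, hn.neg_pow]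

lemma aux_nonneg (n : ℕ) (hn : Even n) (A : Matrix (Fin n) (Fin n) ℝ)
    (hA : Aᵀ * A = 1) (hdet : A.det = 1) (t : ℝ) (ht : 0 < t) :
    0 ≤ ((1 : Matrix (Fin n) (Fin n) ℝ) - t • A).det := by
  set g : ℝ → ℝ := fun s => ((1 : Matrix (Fin n) (Fin n) ℝ) - s • A).det with hg
  have hcont : Continuous g := Continuous.matrix_det (by fun_prop)
  have hg0 : g 0 = 1 := by simp [hg]
  have hne : ∀ s : ℝ, 0 ≤ s → s ≠ 1 → g s ≠ 0 := by
    intro s hs hs1 h0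
    obtain ⟨v, hv, hveq⟩ := (Matrix.exists_mulVec_eq_zero_iff).2 h0
    have hAv : A.mulVec v ⬝ᵥ A.mulVec v = v ⬝ᵥ v := by
      rw [Matrix.dotProduct_mulVec]
      rw [show vecMul (A.mulVec v) A = (Aᵀ * A).mulVec v from ?_, hA, one_mulVec]
      rw [← Matrix.mulVec_transpose, ← Matrix.mulVec_mulVec]
    have hveq' : v = s • A.mulVec v := by
      have := hveq
      rw [Matrix.sub_mulVec, Matrix.one_mulVec, Matrix.smul_mulVec] at this
      linear_combination (norm := module) this
    have hdp : v ⬝ᵥ v = s ^ 2 * (v ⬝ᵥ v) := by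
      conv_lhs => rw [hveq']
      rw [smul_dotProduct, dotProduct_smul, hAv, smul_eq_mul, smul_eq_mul]
      ring
    have hpos : 0 < v ⬝ᵥ v := by
      have hnn : 0 ≤ v ⬝ᵥ v := Finset.sum_nonneg fun i _ => mul_self_nonneg _
      rcases hnn.lt_or_eq with h | h
      · exact h
      · exact absurd (dotProduct_self_eq_zero.1 h.symm) hv
    have : s ^ 2 = 1 := by
      have := hdp
      nlinarith
    have : s = 1 := by nlinarith
    exact hs1 this
  have hpos_lt : ∀ s : ℝ, 0 ≤ s → s < 1 → 0 < g s := by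
    intro s hs hs1
    by_contra h
    push_neg at h
    have h0 : (0 : ℝ) ∈ Set.Icc (g s) (g 0) := by constructor <;> simp [hg0, h]
    obtain ⟨u, hu, hgu⟩ := intermediate_value_Icc' hs (hcont.continuousOn) h0
    exact hne u hu.1 (by linarith [hu.2]) hgu
  rcases lt_trichotomy t 1 with h | h | h
  · exact (hpos_lt t ht.le h).le
  · subst h
    have : Filter.Tendsto g (nhdsWithin 1 (Set.Iio 1)) (nhds (g 1)) :=
      (hcont.tendsto 1).mono_left nhdsWithin_le_nhds
    refine ge_of_tendsto this ?_
    filter_upwards [Ioo_mem_nhdsLT_of_mem (by norm_num : (1:ℝ) ∈ Set.Ioc 0 1)] with x hx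
    exact (hpos_lt x hx.1.le hx.2).le
  · have := aux_funeq n hn A hA hdet t (by positivity)
    rw [hg] at *
    rw [this]
    have h1 : 0 < t⁻¹ := by positivity
    have h2 : t⁻¹ < 1 := by
      rw [inv_lt_one_iff₀]; right; exact h
    have := hpos_lt t⁻¹ h1.le h2
    positivity


/-- For a special orthogonal real matrix `A` of even size `2l ≥ 2` and `c ∈ ℝ`:
`det(1 − e^c A) = e^{2lc} · det(1 − e^{−c} A)`, and `det(1 − e^{−c} A) ≥ 0`. -/
theorem det_one_sub_exp_smul_special_orthogonal
    (l : ℕ) (hl : 1 ≤ l) (A : Matrix (Fin (2 * l)) (Fin (2 * l)) ℝ)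
    (hA : Aᵀ * A = 1) (hdet : A.det = 1) (c : ℝ) :
    ((1 : Matrix (Fin (2 * l)) (Fin (2 * l)) ℝ) - Real.exp c • A).det =
      Real.exp (2 * l * c) *
        ((1 : Matrix (Fin (2 * l)) (Fin (2 * l)) ℝ) - Real.exp (-c) • A).det ∧
    0 ≤ ((1 : Matrix (Fin (2 * l)) (Fin (2 * l)) ℝ) - Real.exp (-c) • A).det := by
  have hn : Even (2 * l) := even_two_mul l
  constructor
  · have := aux_funeq (2 * l) hn A hA hdet (Real.exp c) (Real.exp_ne_zero c)
    rw [← Real.exp_neg] at this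
    rw [this, ← Real.exp_nat_mul]
    push_cast
    ring_nf
  · exact aux_nonneg (2 * l) hn A hA hdet (Real.exp (-c)) (Real.exp_pos _)
end

section
/- Let p and q be odd positive integers, and let A be a real p×p matrix and B a real q×q matrix with Aᵀ·A = 1, det A = 1, Bᵀ·B = 1 and det B = 1. If the Kronecker product A ⊗ B equals the identity matrix of size pq, then A = 1 and B = 1. -/
open Matrix Kronecker

/-!
Comparing entries of `A ⊗ₖ B = 1` gives `A i k * B j l = δᵢₖ δⱼₗ`, so each factor is a scalar
matrix, `A = (B j j)⁻¹ • 1` and `B = (A i i)⁻¹ • 1`. A scalar matrix `c • 1` of odd size with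
determinant `cᵖ = 1` over an ordered field has `c = 1`, since odd powers are injective. Hence
`A = 1`, and then `B = (A i i)⁻¹ • 1 = 1`.
-/

namespace Matrix

section Kronecker

variable {K m n : Type*} [Field K] [DecidableEq m] [DecidableEq n]

theorem mul_apply_eq_one_apply_mul_one_apply_of_kronecker_eq_one {A : Matrix m m K}
    {B : Matrix n n K} (h : A ⊗ₖ B = 1) (i k : m) (j l : n) :
    A i k * B j l = (1 : Matrix m m K) i k * (1 : Matrix n n K) j l := by
  rw [← kronecker_apply, h, ← one_kronecker_one, kronecker_apply]

theorem eq_inv_smul_one_of_mul_apply_eq_one_apply_mul_one_apply {A : Matrix m m K}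
    {B : Matrix n n K}
    (hAB : ∀ i k j l, A i k * B j l = (1 : Matrix m m K) i k * (1 : Matrix n n K) j l) (j : n) :
    A = (B j j)⁻¹ • 1 := by
  ext i k
  have hB : B j j ≠ 0 := right_ne_zero_of_mul_eq_one (by simpa using hAB i i j j)
  rw [smul_apply, smul_eq_mul, eq_inv_mul_iff_mul_eq₀ hB, mul_comm, hAB, one_apply_eq, mul_one]

theorem eq_inv_smul_one_of_kronecker_eq_one_left {A : Matrix m m K} {B : Matrix n n K}
    (h : A ⊗ₖ B = 1) (j : n) : A = (B j j)⁻¹ • 1 :=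
  eq_inv_smul_one_of_mul_apply_eq_one_apply_mul_one_apply
    (mul_apply_eq_one_apply_mul_one_apply_of_kronecker_eq_one h) j

theorem eq_inv_smul_one_of_kronecker_eq_one_right {A : Matrix m m K} {B : Matrix n n K}
    (h : A ⊗ₖ B = 1) (i : m) : B = (A i i)⁻¹ • 1 :=
  eq_inv_smul_one_of_mul_apply_eq_one_apply_mul_one_apply (fun j l i k => by
    rw [mul_comm, mul_apply_eq_one_apply_mul_one_apply_of_kronecker_eq_one h, mul_comm]) i

end Kronecker

theorem smul_one_eq_one_of_det_eq_one {R m : Type*} [Field R] [LinearOrder R]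
    [IsStrictOrderedRing R] [Fintype m] [DecidableEq m] (hm : Odd (Fintype.card m)) {c : R}
    (h : (c • 1 : Matrix m m R).det = 1) : (c • 1 : Matrix m m R) = 1 := by
  rw [det_smul, det_one, mul_one, ← one_pow (Fintype.card m), hm.pow_inj] at h
  rw [h, one_smul]

end Matrix

theorem kronecker_eq_one_of_special_orthogonal_general
    (p q : ℕ) (hp : Odd p) (hq : Odd q)
    (A : Matrix (Fin p) (Fin p) ℝ) (B : Matrix (Fin q) (Fin q) ℝ)
    (hdetA : A.det = 1)
    (h : A ⊗ₖ B = 1) : A = 1 ∧ B = 1 := by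
  let i₀ : Fin p := ⟨0, hp.pos⟩
  let j₀ : Fin q := ⟨0, hq.pos⟩
  have hA_scalar := eq_inv_smul_one_of_kronecker_eq_one_left h j₀
  have hA : A = 1 := by
    rw [hA_scalar] at hdetA ⊢
    exact smul_one_eq_one_of_det_eq_one (by simpa using hp) hdetA
  refine ⟨hA, ?_⟩
  rw [eq_inv_smul_one_of_kronecker_eq_one_right h i₀, hA, one_apply_eq, inv_one, one_smul]

/-- Let `p, q` be odd positive integers and `A`, `B` special orthogonal real matrices of sizes
`p` and `q`.  If the Kronecker product `A ⊗ₖ B` is the identity, then `A = 1` and `B = 1`. -/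
theorem kronecker_eq_one_of_special_orthogonal
    (p q : ℕ) (hp : Odd p) (hp' : 0 < p) (hq : Odd q) (hq' : 0 < q)
    (A : Matrix (Fin p) (Fin p) ℝ) (B : Matrix (Fin q) (Fin q) ℝ)
    (hA : Aᵀ * A = 1) (hdetA : A.det = 1) (hB : Bᵀ * B = 1) (hdetB : B.det = 1)
    (h : A ⊗ₖ B = 1) : A = 1 ∧ B = 1 :=
  kronecker_eq_one_of_special_orthogonal_general p q hp hq A B hdetA h
end

section
/- Let c > 0 be a real number, r a natural number, A a real number, and f : ℝ → ℝ a function. Assume that, as h → 0, f(−c + h) − A·h^r = O(h^{r+1}). Then, as σ → 0, f(−√(σ² + c²)) − A·(−σ²/(2c))^r = O(σ^{2r+2}). -/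
/-!
Substitute `t = σ²` and write `g t = c - √(t + c²)`, so that `-√(σ² + c²) = -c + g σ²`.
Differentiability of the square root at `c² ≠ 0` gives `g t = O(t)`, and since `s = √(t + c²)`
satisfies `s² = t + c²`, one has the exact identity `g t + t / (2c) = (g t)² / (2c)`: thus `g t`
and `-t / (2c)` agree up to `O(t²)`, and their `r`-th powers up to `O(t^{r+1})`. The hypothesis on
`f`, applied at `h = g t → 0`, gives `f(-c + g t) = A (g t)^r + O(t^{r+1})`.
-/

open Asymptotics Filter Topology

theorem Asymptotics.IsBigO.pow_sub_pow {α R S : Type*} [SeminormedCommRing R] [NormedRing S]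
    [NormMulClass S] [NormOneClass S] {l : Filter α} {u v : α → R} {w z : α → S}
    (hu : u =O[l] w) (hv : v =O[l] w) (huv : (fun x => u x - v x) =O[l] fun x => w x * z x) :
    ∀ n : ℕ, (fun x => u x ^ n - v x ^ n) =O[l] fun x => w x ^ n * z x
  | 0 => by simpa using isBigO_zero _ _
  | n + 1 => by
    have h₁ : (fun x => u x * (u x ^ n - v x ^ n)) =O[l] fun x => w x ^ (n + 1) * z x :=
      (hu.mul (hu.pow_sub_pow hv huv n)).congr_right fun x => by rw [pow_succ', mul_assoc]
    have h₂ : (fun x => v x ^ n * (u x - v x)) =O[l] fun x => w x ^ (n + 1) * z x :=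
      ((hv.pow n).mul huv).congr_right fun x => by rw [pow_succ, mul_assoc]
    exact (h₁.add h₂).congr_left fun x => by ring

theorem sub_sqrt_add_sq_isBigO {c : ℝ} (hc : 0 < c) :
    (fun t : ℝ => c - √(t + c ^ 2)) =O[𝓝 0] fun t => t := by
  have hd : DifferentiableAt ℝ (fun t : ℝ => √(t + c ^ 2)) 0 :=
    (differentiableAt_id.add_const _).sqrt (by simp [hc.ne'])
  simpa [Real.sqrt_sq hc.le] using hd.isBigO_sub.neg_left

theorem sub_sqrt_add_sq_add_div_isBigO {c : ℝ} (hc : 0 < c) :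
    (fun t : ℝ => c - √(t + c ^ 2) - -t / (2 * c)) =O[𝓝 0] fun t => t * t := by
  have hsq := ((sub_sqrt_add_sq_isBigO hc).mul (sub_sqrt_add_sq_isBigO hc))
    |>.const_mul_left (2 * c)⁻¹
  refine hsq.congr' ?_ EventuallyEq.rfl
  filter_upwards [eventually_ge_nhds (neg_neg_of_pos (pow_pos hc 2))] with t ht
  have hs := Real.sq_sqrt (neg_le_iff_add_nonneg.mp ht)
  field_simp
  linear_combination hs

theorem isBigO_comp_neg_sqrt_add_sq {c : ℝ} (hc : 0 < c) {r : ℕ} {A : ℝ} {f : ℝ → ℝ}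
    (h : (fun h : ℝ => f (-c + h) - A * h ^ r) =O[𝓝 0] fun h : ℝ => h ^ (r + 1)) :
    (fun t : ℝ => f (-√(t + c ^ 2)) - A * (-t / (2 * c)) ^ r) =O[𝓝 0] fun t => t ^ (r + 1) := by
  have hg := sub_sqrt_add_sq_isBigO hc
  have hm : (fun t : ℝ => -t / (2 * c)) =O[𝓝 0] fun t => t :=
    (isBigO_refl (fun t : ℝ => t) _).neg_left.const_mul_left (2 * c)⁻¹ |>.congr_left
      fun t => by ring
  have hexpand : (fun t => f (-c + (c - √(t + c ^ 2))) - A * (c - √(t + c ^ 2)) ^ r)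
      =O[𝓝 0] fun t => t ^ (r + 1) :=
    (h.comp_tendsto (hg.trans_tendsto tendsto_id)).trans (hg.pow (r + 1))
  have hpow : (fun t => A * ((c - √(t + c ^ 2)) ^ r - (-t / (2 * c)) ^ r))
      =O[𝓝 0] fun t => t ^ (r + 1) :=
    (hg.pow_sub_pow hm (sub_sqrt_add_sq_add_div_isBigO hc) r).const_mul_left A
      |>.congr_right fun t => (pow_succ t r).symm
  exact (hexpand.add hpow).congr_left fun t => by ring_nf

/-- Let `c > 0`, `r ∈ ℕ`, `A ∈ ℝ` and `f : ℝ → ℝ`.  If `f(−c+h) − A·h^r = O(h^{r+1})` as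
`h → 0`, then `f(−√(σ²+c²)) − A·(−σ²/(2c))^r = O(σ^{2r+2})` as `σ → 0`. -/
theorem isBigO_comp_neg_sqrt
    (c : ℝ) (hc : 0 < c) (r : ℕ) (A : ℝ) (f : ℝ → ℝ)
    (h : (fun h : ℝ => f (-c + h) - A * h ^ r) =O[nhds 0] fun h : ℝ => h ^ (r + 1)) :
    (fun σ : ℝ => f (-Real.sqrt (σ ^ 2 + c ^ 2)) - A * (-σ ^ 2 / (2 * c)) ^ r)
      =O[nhds 0] fun σ : ℝ => σ ^ (2 * r + 2) := by
  have hsq : Tendsto (fun σ : ℝ => σ ^ 2) (𝓝 0) (𝓝 0) := by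
    simpa using (continuous_pow 2).tendsto (0 : ℝ)
  exact (isBigO_comp_neg_sqrt_add_sq hc h).comp_tendsto hsq |>.congr_right fun σ => by
    simp only [Function.comp_apply, ← pow_mul]; ring_nf
end

section
/- Let ι be a countable index set, d : ι → ℝ a function with d i ≥ 0 for all i, and let c > 0 and t > 0 be real numbers. Assume that for every r ≥ 0 the set {i ∈ ι : d i ≤ r} is finite. Then, as an identity of extended nonnegative reals, ∑_{i ∈ ι} exp(−c·(d i)²/t) = c · ∫₀^∞ N(√(r·t)) · exp(−c·r) dr, where N(s) denotes the (finite) cardinality of {i ∈ ι : d i ≤ s} and the sum and integral are taken in [0, ∞]. -/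
/-!
Layer cake: writing `a i = (d i)² / t`, the counting function is `N(√(r t)) = ∑ᵢ 1[a i ≤ r]`,
so by Tonelli the right-hand side is `∑ᵢ c ∫_{a i}^∞ e^{-c r} dr = ∑ᵢ e^{-c a i}`.
-/

open MeasureTheory Set
open scoped ENNReal

lemma lintegral_Ici_exp_neg_mul {c : ℝ} (hc : 0 < c) (a : ℝ) :
    ∫⁻ r in Ici a, ENNReal.ofReal (Real.exp (-c * r)) =
      ENNReal.ofReal (Real.exp (-c * a) / c) := by
  rw [← Measure.restrict_congr_set Ioi_ae_eq_Ici, ← ofReal_integral_eq_lintegral_ofReal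
    (exp_neg_integrableOn_Ioi a hc) (.of_forall fun _ => (Real.exp_pos _).le),
    integral_exp_mul_Ioi (neg_neg_of_pos hc), neg_div_neg_eq]

lemma Set.Finite.ncard_eq_tsum_indicator {ι : Type*} {s : Set ι} (hs : s.Finite) :
    (s.ncard : ℝ≥0∞) = ∑' i, s.indicator 1 i := by
  rw [← tsum_subtype]
  simp only [Pi.one_apply]
  rw [ENNReal.tsum_set_one, ← hs.cast_ncard_eq, ENat.toENNReal_coe]

lemma lintegral_tsum_indicator_mul {ι α : Type*} [Countable ι] [MeasurableSpace α]
    {μ : Measure α} {s : ι → Set α} (hs : ∀ i, MeasurableSet (s i)) {f : α → ℝ≥0∞}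
    (hf : AEMeasurable f μ) :
    ∫⁻ x, (∑' i, (s i).indicator 1 x) * f x ∂μ = ∑' i, ∫⁻ x in s i, f x ∂μ := by
  simp_rw [← ENNReal.tsum_mul_right, ← indicator_mul_left, Pi.one_apply, one_mul]
  rw [lintegral_tsum fun i => hf.indicator (hs i)]
  simp_rw [lintegral_indicator (hs _)]

/-- Layer-cake identity: for `d : ι → ℝ` nonnegative with finite sublevel sets, `c, t > 0`,
`∑ᵢ exp (−c·(d i)²/t) = c · ∫₀^∞ N(√(r·t)) · exp (−c·r) dr` in `[0,∞]`, where `N(s)` is the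
cardinality of `{i | d i ≤ s}`. -/
theorem tsum_exp_eq_lintegral_counting
    {ι : Type*} [Countable ι] (d : ι → ℝ) (hd : ∀ i, 0 ≤ d i)
    (c t : ℝ) (hc : 0 < c) (ht : 0 < t)
    (hfin : ∀ r : ℝ, 0 ≤ r → {i : ι | d i ≤ r}.Finite) :
    ∑' i : ι, ENNReal.ofReal (Real.exp (-c * (d i) ^ 2 / t)) =
      ENNReal.ofReal c *
        ∫⁻ r in Set.Ioi (0 : ℝ),
          ({i : ι | d i ≤ Real.sqrt (r * t)}.ncard : ENNReal) *
            ENNReal.ofReal (Real.exp (-c * r)) := by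
  have hcount : ∀ r ∈ Ici (0 : ℝ), ({i | d i ≤ √(r * t)}.ncard : ℝ≥0∞) =
      ∑' i, (Ici (d i ^ 2 / t)).indicator 1 r := by
    intro r hr
    have hsublevel : {i | d i ≤ √(r * t)} = {i | d i ^ 2 / t ≤ r} := by
      ext i
      exact (Real.le_sqrt (hd i) (mul_nonneg hr ht.le)).trans (div_le_iff₀ ht).symm
    rw [(hfin _ (Real.sqrt_nonneg _)).ncard_eq_tsum_indicator, hsublevel]
    rfl
  rw [Measure.restrict_congr_set Ioi_ae_eq_Ici, setLIntegral_congr_fun measurableSet_Ici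
    fun r hr => congrArg (· * _) (hcount r hr), lintegral_tsum_indicator_mul
    (fun _ => measurableSet_Ici) (by fun_prop), ← ENNReal.tsum_mul_left]
  refine tsum_congr fun i => ?_
  have hai : 0 ≤ d i ^ 2 / t := by positivity
  rw [Measure.restrict_restrict measurableSet_Ici, Ici_inter_Ici, sup_eq_left.2 hai,
    lintegral_Ici_exp_neg_mul hc, ← ENNReal.ofReal_mul hc.le, mul_div_cancel₀ _ hc.ne',
    mul_div_assoc]
end
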